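/- Let P be a polynomial over K whose Newton polygon has an extremal point at abscissa d, with left slope λ₀ and right slope λ₁ (λ₀ < λ₁), normalized so NF(P)(d) = λ₀ d. Define φ(x) = NF(P)(x) for x ≤ d and φ(x) = λ₀ x for x > d, and b_φ(Q) = min_x (NF(Q)(x) − φ(x)), b₀(Q) = min_x (NF(Q)(x) − λ₀ x). Then for all nonzero polynomials Q₁, Q₂: b_φ(Q₁ Q₂) ≥ b_φ(Q₁) + b₀(Q₂). -/

import Mathlib

open Polynomial Set

noncomputable section

variable {K : Type*} [Field K]

/-- Map `WithTop ℤ` into `EReal`. -/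
def toE : WithTop ℤ → EReal := WithTop.recTopCoe ⊤ (fun n => ((n : ℝ) : EReal))

/-- Newton function of a polynomial: the largest convex function lying below the
points `(i, val aᵢ)`, realized as the sup of affine minorants. -/
def NF (v : AddValuation K (WithTop ℤ)) (P : K[X]) (x : ℝ) : EReal :=
  sSup {y : EReal | ∃ a b : ℝ,
    (∀ i : ℕ, i ≤ P.natDegree → ((a * (i : ℝ) + b : ℝ) : EReal) ≤ toE (v (P.coeff i))) ∧
    y = ((a * x + b : ℝ) : EReal)}

/-- The invariant `b_φ(Q) = min_{0 ≤ x ≤ deg Q} (NF(Q)(x) − φ(x))`. -/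
def bE (v : AddValuation K (WithTop ℤ)) (φ : ℝ → EReal) (Q : K[X]) : EReal :=
  sInf {y : EReal | ∃ x : ℝ, 0 ≤ x ∧ x ≤ (Q.natDegree : ℝ) ∧ y = NF v Q x - φ x}

/-! The line `y = λ₀ x` supports `NF(P)` (it passes through the vertex `d` and its neighbour
`d - 1`, and `λ₀ < λ₁`), so `φ` is the upper envelope of the affine functions `ℓ ≤ φ` of slope
at most `λ₀`: a minorant of `P` of larger slope is replaced by the line of slope `λ₀` through
its value at `d`. For such an `ℓ` and reals `r₁ < b_φ(Q₁)`, `r₂ < b₀(Q₂)`, each product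
`q₁ᵢ q₂ⱼ` with `i + j = k` has valuation at least `ℓ(i) + r₁ + λ₀ j + r₂ ≥ ℓ(k) + r₁ + r₂`,
so `ℓ + r₁ + r₂` is an affine minorant of `Q₁Q₂`; taking the supremum over `ℓ` gives
`NF(Q₁Q₂) ≥ φ + r₁ + r₂`. -/

lemma EReal.add_le_of_forall_coe_lt {a b c : EReal}
    (h : ∀ r : ℝ, (r : EReal) < a → ∀ s : ℝ, (s : EReal) < b → ((r + s : ℝ) : EReal) ≤ c) :
    a + b ≤ c := by
  refine EReal.add_le_of_forall_lt fun a' ha' b' hb' => ?_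
  induction a' using EReal.rec with
  | bot => simp
  | top => exact absurd ha' not_top_lt
  | coe r =>
    induction b' using EReal.rec with
    | bot => simp
    | top => exact absurd hb' not_top_lt
    | coe s => exact_mod_cast h r ha' s hb'

lemma EReal.coe_le_sub_coe_iff (a b : ℝ) (c : EReal) :
    (a : EReal) ≤ c - b ↔ ((a + b : ℝ) : EReal) ≤ c := by
  rw [EReal.coe_add, EReal.le_sub_iff_add_le (.inl (EReal.coe_ne_bot b)) (.inl (EReal.coe_ne_top b))]

@[simp] lemma toE_top : toE ⊤ = ⊤ := rfl

@[simp] lemma toE_coe (n : ℤ) : toE n = ((n : ℝ) : EReal) := rfl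

lemma toE_monotone : Monotone toE := by
  intro x y h
  induction y using WithTop.recTopCoe with
  | top => exact le_top
  | coe n =>
    induction x using WithTop.recTopCoe with
    | top => exact absurd h (by simp)
    | coe m => simpa using h

lemma toE_ne_bot (x : WithTop ℤ) : toE x ≠ ⊥ := by
  induction x using WithTop.recTopCoe <;> simp

lemma toE_add (x y : WithTop ℤ) : toE (x + y) = toE x + toE y := by
  induction x using WithTop.recTopCoe with
  | top => simp [EReal.top_add_of_ne_bot (toE_ne_bot y)]
  | coe m =>
    induction y using WithTop.recTopCoe with
    | top => simp
    | coe n => simp [← WithTop.coe_add, ← EReal.coe_add]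

lemma le_toE_map_sum (v : AddValuation K (WithTop ℤ)) {ι : Type*} (s : Finset ι) (f : ι → K)
    {C : EReal} (h : ∀ i ∈ s, C ≤ toE (v (f i))) : C ≤ toE (v (∑ i ∈ s, f i)) := by
  rcases s.eq_empty_or_nonempty with rfl | hs
  · simp
  obtain ⟨i₀, hi₀, hmin⟩ := s.exists_min_image (fun i => v (f i)) hs
  exact (h i₀ hi₀).trans (toE_monotone (v.map_le_sum hmin))

section Newton

variable (v : AddValuation K (WithTop ℤ)) (Q : K[X])

lemma coe_le_NF {a b : ℝ}
    (h : ∀ i : ℕ, i ≤ Q.natDegree → ((a * (i : ℝ) + b : ℝ) : EReal) ≤ toE (v (Q.coeff i)))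
    (x : ℝ) : ((a * x + b : ℝ) : EReal) ≤ NF v Q x :=
  le_sSup ⟨a, b, h, rfl⟩

lemma NF_natCast_le {i : ℕ} (hi : i ≤ Q.natDegree) : NF v Q i ≤ toE (v (Q.coeff i)) :=
  sSup_le fun _ ⟨_, _, hab, hy⟩ => hy ▸ hab i hi

lemma NF_le_chord {u t w A B : ℝ} (hut : u ≤ t) (htw : t ≤ w) (huw : u < w)
    (hA : NF v Q u ≤ A) (hB : NF v Q w ≤ B) :
    NF v Q t ≤ ((((w - t) * A + (t - u) * B) / (w - u) : ℝ) : EReal) := by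
  refine sSup_le ?_
  rintro _ ⟨a, b, hab, rfl⟩
  have hu : a * u + b ≤ A := by exact_mod_cast (coe_le_NF v Q hab u).trans hA
  have hw : a * w + b ≤ B := by exact_mod_cast (coe_le_NF v Q hab w).trans hB
  rw [EReal.coe_le_coe_iff, le_div_iff₀ (by linarith)]
  nlinarith [mul_le_mul_of_nonneg_left hu (by linarith : (0 : ℝ) ≤ w - t),
    mul_le_mul_of_nonneg_left hw (by linarith : (0 : ℝ) ≤ t - u)]

lemma NF_ne_top_of_mem_Icc {u x w : ℝ} (hux : u ≤ x) (hxw : x ≤ w)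
    (hu : NF v Q u ≠ ⊤) (hw : NF v Q w ≠ ⊤) : NF v Q x ≠ ⊤ := by
  rcases hux.eq_or_lt with rfl | hlt
  · exact hu
  exact ne_top_of_le_ne_top (EReal.coe_ne_top _) <|
    NF_le_chord v Q hux hxw (hlt.trans_le hxw) (EReal.le_coe_toReal hu) (EReal.le_coe_toReal hw)

lemma apply_zero_ne_top_of_lt_bE {ψ : ℝ → EReal} {r : ℝ} (hr : (r : EReal) < bE v ψ Q) :
    ψ 0 ≠ ⊤ := by
  intro h
  have hb : bE v ψ Q ≤ NF v Q 0 - ψ 0 := sInf_le ⟨0, le_rfl, Nat.cast_nonneg _, rfl⟩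
  rw [h, EReal.sub_top] at hb
  exact not_lt_bot (hr.trans_le hb)

lemma coe_add_le_toE_coeff_of_lt_bE {ψ : ℝ → EReal} {c r : ℝ} {i : ℕ}
    (hc : (c : EReal) ≤ ψ i) (hr : (r : EReal) < bE v ψ Q) :
    ((c + r : ℝ) : EReal) ≤ toE (v (Q.coeff i)) := by
  by_cases hi : i ≤ Q.natDegree
  · have hb : bE v ψ Q ≤ NF v Q i - ψ i := sInf_le ⟨i, i.cast_nonneg, by exact_mod_cast hi, rfl⟩
    have hrc : (r : EReal) ≤ NF v Q i - c := (hr.le.trans hb).trans (EReal.sub_le_sub le_rfl hc)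
    rw [add_comm]
    exact ((EReal.coe_le_sub_coe_iff r c _).1 hrc).trans (NF_natCast_le v Q hi)
  · rw [coeff_eq_zero_of_natDegree_lt (not_le.1 hi), v.map_zero, toE_top]
    exact le_top

lemma coe_add_le_NF_mul {φ : ℝ → EReal} {lam a b r₁ r₂ : ℝ} (Q₁ Q₂ : K[X]) (ha : a ≤ lam)
    (hφ : ∀ y, ((a * y + b : ℝ) : EReal) ≤ φ y) (hr₁ : (r₁ : EReal) < bE v φ Q₁)
    (hr₂ : (r₂ : EReal) < bE v (fun x => ((lam * x : ℝ) : EReal)) Q₂) (x : ℝ) :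
    ((a * x + b + (r₁ + r₂) : ℝ) : EReal) ≤ NF v (Q₁ * Q₂) x := by
  rw [add_assoc]
  refine coe_le_NF v _ (fun k _ => ?_) x
  rw [coeff_mul]
  refine le_toE_map_sum v _ _ ?_
  rintro ⟨i, j⟩ hij
  rw [Finset.HasAntidiagonal.mem_antidiagonal] at hij
  rw [v.map_mul, toE_add]
  have h₁ := coe_add_le_toE_coeff_of_lt_bE v Q₁ (hφ i) hr₁
  have h₂ := coe_add_le_toE_coeff_of_lt_bE v Q₂ (c := lam * j) le_rfl hr₂
  refine le_trans ?_ (add_le_add h₁ h₂)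
  rw [← EReal.coe_add, EReal.coe_le_coe_iff, ← hij]
  push_cast
  nlinarith [mul_le_mul_of_nonneg_right ha j.cast_nonneg]

end Newton

def extNF (v : AddValuation K (WithTop ℤ)) (P : K[X]) (d : ℕ) (lam0 : ℝ) (x : ℝ) : EReal :=
  if x ≤ (d : ℝ) then NF v P x else ((lam0 * x : ℝ) : EReal)

section Vertex

variable (v : AddValuation K (WithTop ℤ)) (P : K[X]) {d : ℕ} {lam0 : ℝ}

lemma coe_mul_le_NF_of_vertex {lam1 : ℝ} (hlt : lam0 < lam1)
    (hnorm : NF v P (d : ℝ) = ((lam0 * d : ℝ) : EReal))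
    (hleft : NF v P ((d : ℝ) - 1) = ((lam0 * ((d : ℝ) - 1) : ℝ) : EReal))
    (hright : NF v P ((d : ℝ) + 1) = ((lam0 * d + lam1 : ℝ) : EReal)) (x : ℝ) :
    ((lam0 * x : ℝ) : EReal) ≤ NF v P x := by
  suffices h : ∀ i ≤ P.natDegree, ((lam0 * i + 0 : ℝ) : EReal) ≤ toE (v (P.coeff i)) by
    simpa using coe_le_NF v P h x
  intro i hi
  refine le_trans ?_ (NF_natCast_le v P hi)
  refine EReal.le_of_forall_lt_iff_le.1 fun z hz => ?_
  rw [add_zero, EReal.coe_le_coe_iff]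
  rcases lt_trichotomy i d with hid | rfl | hdi
  · have hid' : (i : ℝ) + 1 ≤ d := by exact_mod_cast hid
    have h := NF_le_chord v P (t := (d : ℝ) - 1) (by linarith) (by linarith) (by linarith)
      hz.le hnorm.le
    rw [hleft, EReal.coe_le_coe_iff, le_div_iff₀ (by linarith)] at h
    nlinarith
  · exact_mod_cast hnorm ▸ hz.le
  · have hdi' : (d : ℝ) + 1 ≤ i := by exact_mod_cast hdi
    have h := NF_le_chord v P (t := (d : ℝ) + 1) (by linarith) hdi' (by linarith)
      hnorm.le hz.le
    rw [hright, EReal.coe_le_coe_iff, le_div_iff₀ (by linarith)] at h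
    nlinarith [mul_le_mul_of_nonneg_right hlt.le (by linarith : (0 : ℝ) ≤ i - d)]

lemma coe_le_extNF {a b : ℝ} (hnorm : NF v P (d : ℝ) = ((lam0 * d : ℝ) : EReal)) (ha : a ≤ lam0)
    (h : ∀ y ≤ (d : ℝ), ((a * y + b : ℝ) : EReal) ≤ NF v P y) (y : ℝ) :
    ((a * y + b : ℝ) : EReal) ≤ extNF v P d lam0 y := by
  unfold extNF
  split_ifs with hy
  · exact h y hy
  · have hd := h d le_rfl
    rw [hnorm, EReal.coe_le_coe_iff] at hd
    rw [EReal.coe_le_coe_iff]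
    nlinarith [mul_le_mul_of_nonneg_right ha (by linarith : (0 : ℝ) ≤ y - d)]

lemma coe_mul_le_extNF (hsupp : ∀ y, ((lam0 * y : ℝ) : EReal) ≤ NF v P y) (y : ℝ) :
    ((lam0 * y : ℝ) : EReal) ≤ extNF v P d lam0 y := by
  unfold extNF
  split_ifs
  exacts [hsupp y, le_rfl]

lemma extNF_le_of_forall_coe_le (hnorm : NF v P (d : ℝ) = ((lam0 * d : ℝ) : EReal))
    (hsupp : ∀ y, ((lam0 * y : ℝ) : EReal) ≤ NF v P y) {E : EReal} (x : ℝ)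
    (hE : ∀ a b : ℝ, a ≤ lam0 → (∀ y, ((a * y + b : ℝ) : EReal) ≤ extNF v P d lam0 y) →
      ((a * x + b : ℝ) : EReal) ≤ E) :
    extNF v P d lam0 x ≤ E := by
  have hline : ∀ y, ((lam0 * y + 0 : ℝ) : EReal) ≤ extNF v P d lam0 y := fun y => by
    simpa using coe_mul_le_extNF v P hsupp y
  unfold extNF
  split_ifs with hx
  · refine sSup_le ?_
    rintro _ ⟨a, b, hab, rfl⟩
    have hd := coe_le_NF v P hab d
    rw [hnorm, EReal.coe_le_coe_iff] at hd
    rcases le_total a lam0 with ha | ha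
    · exact hE a b ha (coe_le_extNF v P hnorm ha fun y _ => coe_le_NF v P hab y)
    · refine le_trans ?_ (hE lam0 (a * d + b - lam0 * d) le_rfl fun y => le_trans ?_ (hline y))
      · rw [EReal.coe_le_coe_iff]
        nlinarith [mul_le_mul_of_nonneg_right ha (by linarith : (0 : ℝ) ≤ d - x)]
      · rw [EReal.coe_le_coe_iff]
        linarith
  · simpa using hE lam0 0 le_rfl hline

lemma extNF_ne_top (hnorm : NF v P (d : ℝ) = ((lam0 * d : ℝ) : EReal))
    (h0 : extNF v P d lam0 0 ≠ ⊤) {x : ℝ} (hx : 0 ≤ x) : extNF v P d lam0 x ≠ ⊤ := by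
  rw [extNF, if_pos d.cast_nonneg] at h0
  unfold extNF
  split_ifs with hxd
  · exact NF_ne_top_of_mem_Icc v P hx hxd h0 (hnorm ▸ EReal.coe_ne_top _)
  · exact EReal.coe_ne_top _

end Vertex

theorem stmt6_general (v : AddValuation K (WithTop ℤ)) (P : K[X])
    (d : ℕ)
    (lam0 lam1 : ℝ) (hlt : lam0 < lam1)
    (hnorm : NF v P (d : ℝ) = ((lam0 * d : ℝ) : EReal))
    (hleft : NF v P ((d : ℝ) - 1) = ((lam0 * ((d : ℝ) - 1) : ℝ) : EReal))
    (hright : NF v P ((d : ℝ) + 1) = ((lam0 * d + lam1 : ℝ) : EReal))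
    (Q₁ Q₂ : K[X]) :
    bE v (fun x => if x ≤ (d : ℝ) then NF v P x else ((lam0 * x : ℝ) : EReal)) Q₁
      + bE v (fun x => ((lam0 * x : ℝ) : EReal)) Q₂
      ≤ bE v (fun x => if x ≤ (d : ℝ) then NF v P x else ((lam0 * x : ℝ) : EReal))
          (Q₁ * Q₂) := by
  change bE v (extNF v P d lam0) Q₁ + _ ≤ bE v (extNF v P d lam0) (Q₁ * Q₂)
  have hsupp := coe_mul_le_NF_of_vertex v P hlt hnorm hleft hright
  refine EReal.add_le_of_forall_coe_lt fun r₁ hr₁ r₂ hr₂ => le_sInf ?_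
  rintro _ ⟨x, hx, -, rfl⟩
  have hbot : extNF v P d lam0 x ≠ ⊥ :=
    ne_bot_of_le_ne_bot (EReal.coe_ne_bot _) (coe_mul_le_extNF v P hsupp x)
  -- `b_φ` subtracts in `EReal`, where `y - ⊤ = ⊥`; `r₁ < b_φ(Q₁)` forces `φ 0 < ⊤`, hence `φ x < ⊤`.
  have htop := extNF_ne_top v P hnorm (apply_zero_ne_top_of_lt_bE v Q₁ hr₁) hx
  obtain ⟨p, hp⟩ : ∃ p : ℝ, extNF v P d lam0 x = p := ⟨_, (EReal.coe_toReal htop hbot).symm⟩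
  have key : extNF v P d lam0 x ≤ NF v (Q₁ * Q₂) x - ((r₁ + r₂ : ℝ) : EReal) :=
    extNF_le_of_forall_coe_le v P hnorm hsupp x fun a b ha hab =>
      (EReal.coe_le_sub_coe_iff _ _ _).2 (coe_add_le_NF_mul v Q₁ Q₂ ha hab hr₁ hr₂ x)
  rw [hp, EReal.coe_le_sub_coe_iff] at key
  rwa [hp, EReal.coe_le_sub_coe_iff, add_comm]

/-- with `φ = NF(P)` on `[0,d]` extended by slope `λ₀` beyond `d`
(`P` normalized so that `NF(P)(d) = λ₀ d`), one has `b_φ(Q₁Q₂) ≥ b_φ(Q₁) + b₀(Q₂)`. -/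
theorem stmt6 (v : AddValuation K (WithTop ℤ)) (P : K[X]) (hP : P ≠ 0)
    (d : ℕ) (hdn : d ≤ P.natDegree)
    (lam0 lam1 : ℝ) (hlt : lam0 < lam1)
    (hnorm : NF v P (d : ℝ) = ((lam0 * d : ℝ) : EReal))
    (hleft : NF v P ((d : ℝ) - 1) = ((lam0 * ((d : ℝ) - 1) : ℝ) : EReal))
    (hright : NF v P ((d : ℝ) + 1) = ((lam0 * d + lam1 : ℝ) : EReal))
    (Q₁ Q₂ : K[X]) (h1 : Q₁ ≠ 0) (h2 : Q₂ ≠ 0) :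
    bE v (fun x => if x ≤ (d : ℝ) then NF v P x else ((lam0 * x : ℝ) : EReal)) Q₁
      + bE v (fun x => ((lam0 * x : ℝ) : EReal)) Q₂
      ≤ bE v (fun x => if x ≤ (d : ℝ) then NF v P x else ((lam0 * x : ℝ) : EReal))
          (Q₁ * Q₂) :=
  stmt6_general v P d lam0 lam1 hlt hnorm hleft hright Q₁ Q₂
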